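/- arXiv:2405.16660 — 7 statements merged into one kernel-verified Lean document; each statement's English description precedes it below -/
import Mathlib

section
/- For every integer n ≥ 1 and every nonzero complex number z, the sum over all sequences s ∈ {H,T}^n of z^{A(s) − B(s)} (integer powers of z) equals the quadratic form (1,1) · M(z)^{n−1} · (1,1)^T, where M(z) is the 2×2 complex matrix with rows (1, z⁻¹) and (1, z). Equivalently, the probability generating function φ_n(z) = Σ_k P(Y_n = k) z^k of the score difference Y_n = A − B satisfies φ_n(z) = 2^{−n} · (1,1) · M(z)^{n−1} · (1,1)^T. -/
/-- Bob's score: number of indices `i < n-1` with `s i = H` and `s (i+1) = T`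
    (`true` = heads). -/
def bobScore {n : ℕ} (s : Fin n → Bool) : ℕ :=
  (Finset.univ.filter (fun i : Fin (n - 1) =>
    s ⟨i.1, lt_of_lt_of_le i.2 (Nat.sub_le n 1)⟩ = true ∧
    s ⟨i.1 + 1, Nat.add_lt_of_lt_sub i.2⟩ = false)).card

/-- Alice's score: number of indices `i < n-1` with `s i = H` and `s (i+1) = H`. -/
def aliceScore {n : ℕ} (s : Fin n → Bool) : ℕ :=
  (Finset.univ.filter (fun i : Fin (n - 1) =>
    s ⟨i.1, lt_of_lt_of_le i.2 (Nat.sub_le n 1)⟩ = true ∧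
    s ⟨i.1 + 1, Nat.add_lt_of_lt_sub i.2⟩ = true)).card

/-- The transfer matrix `M(z)` with rows `(1, z⁻¹)` and `(1, z)`. -/
noncomputable def M (z : ℂ) : Matrix (Fin 2) (Fin 2) ℂ := !![1, z⁻¹; 1, z]

/- Reading the coins from left to right, every adjacent pair `(sᵢ, sᵢ₊₁)` multiplies the weight by
`z`, `z⁻¹` or `1`, namely by the entry of `M(z)ᵀ` at that pair (`T ↦ 0`, `H ↦ 1`). Hence the sum
over all sequences is a sum over paths of length `n - 1` in the two-state graph weighted by `M(z)ᵀ`,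
i.e. `(1,1) ⬝ (M(z)ᵀ)^(n-1) ⬝ (1,1)ᵀ`, which is the same quadratic form for `M(z)`. -/

open Finset Matrix

theorem zpow_sum₀ {G ι : Type*} [CommGroupWithZero G] {a : G} (ha : a ≠ 0) (s : Finset ι)
    (f : ι → ℤ) : a ^ (∑ i ∈ s, f i) = ∏ i ∈ s, a ^ f i := by
  classical
  induction s using Finset.induction_on with
  | empty => simp
  | insert i s hi ih => rw [sum_insert hi, prod_insert hi, zpow_add₀ ha, ih]

theorem Matrix.dotProduct_pow_mulVec_eq_sum_paths {α R : Type*} [Fintype α] [DecidableEq α]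
    [CommSemiring R] (N : Matrix α α R) (k : ℕ) (u w : α → R) :
    u ⬝ᵥ (N ^ k *ᵥ w) = ∑ t : Fin (k + 1) → α,
      u (t 0) * (∏ i : Fin k, N (t i.castSucc) (t i.succ)) * w (t (Fin.last k)) := by
  induction k generalizing u with
  | zero =>
    rw [pow_zero, one_mulVec, ← (Equiv.funUnique (Fin 1) α).symm.sum_comp]
    simp [dotProduct]
  | succ k ih =>
    rw [← (Fin.consEquiv fun _ => α).sum_comp, Fintype.sum_prod_type, sum_comm, pow_succ',
      ← mulVec_mulVec, dotProduct_mulVec, ih]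
    refine sum_congr rfl fun t _ => ?_
    simp only [Fin.consEquiv_apply, Fin.prod_univ_succ, Fin.cons_zero, ← Fin.succ_castSucc,
      Fin.cons_succ, Fin.castSucc_zero, ← Fin.succ_last, vecMul, dotProduct, sum_mul]
    exact sum_congr rfl fun a _ => by ring

def stepScore : Bool → Bool → ℤ
  | true, true => 1
  | true, false => -1
  | false, _ => 0

theorem aliceScore_sub_bobScore {k : ℕ} (s : Fin (k + 1) → Bool) :
    (aliceScore s : ℤ) - bobScore s = ∑ i : Fin k, stepScore (s i.castSucc) (s i.succ) := by
  have hA : (aliceScore s : ℤ) = ∑ i : Fin k, if s i.castSucc ∧ s i.succ then 1 else 0 := by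
    unfold aliceScore; push_cast [card_filter]; rfl
  have hB : (bobScore s : ℤ) = ∑ i : Fin k, if s i.castSucc ∧ s i.succ = false then 1 else 0 := by
    unfold bobScore; push_cast [card_filter]; rfl
  rw [hA, hB, ← sum_sub_distrib]
  refine sum_congr rfl fun i _ => ?_
  cases s i.castSucc <;> cases s i.succ <;> rfl

theorem zpow_stepScore (z : ℂ) (a b : Fin 2) :
    z ^ stepScore (finTwoEquiv a) (finTwoEquiv b) = (M z)ᵀ a b := by
  fin_cases a <;> fin_cases b <;> simp [finTwoEquiv, stepScore, M]

/-- For `n ≥ 1` and `z ≠ 0`, the sum over all sequences of `z^(A(s) - B(s))`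
    equals `(1,1) ⬝ M(z)^(n-1) ⬝ (1,1)ᵀ`. -/
theorem sum_zpow_score_diff_eq_quadratic_form (n : ℕ) (hn : 1 ≤ n) (z : ℂ) (hz : z ≠ 0) :
    ∑ s : Fin n → Bool, z ^ ((aliceScore s : ℤ) - (bobScore s : ℤ)) =
      dotProduct ![1, 1] ((M z ^ (n - 1)).mulVec ![1, 1]) := by
  obtain ⟨k, rfl⟩ : ∃ k, n = k + 1 := ⟨n - 1, by omega⟩
  have hones : (![1, 1] : Fin 2 → ℂ) = fun _ => 1 := by ext j; fin_cases j <;> rfl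
  rw [Nat.add_sub_cancel, dotProduct_comm, ← vecMul_transpose, ← dotProduct_mulVec, transpose_pow,
    (M z)ᵀ.dotProduct_pow_mulVec_eq_sum_paths, hones,
    ← (Equiv.arrowCongr (Equiv.refl _) finTwoEquiv).sum_comp]
  refine sum_congr rfl fun t _ => ?_
  simp only [aliceScore_sub_bobScore, zpow_sum₀ hz, Equiv.arrowCongr_apply, Equiv.coe_refl,
    Function.comp_apply, Equiv.refl_symm, id, zpow_stepScore, one_mul, mul_one]
end

section
/- For every integer n ≥ 1 and every real r with 0 < r and r ≠ 1, one has Δ_n = 2^{−n} · (1/(2πi)) · ∮_{|z|=r} (1,1) · (M(z)^{n−1} − M(1/z)^{n−1})/(1 − z) · (1,1)^T dz, where M(z) is the 2×2 complex matrix with rows (1, z⁻¹) and (1, z) and the integral is over the circle of radius r centered at the origin, traversed counterclockwise. -/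
open scoped Real

/-- Number of length-`n` coin sequences where Bob's score strictly exceeds Alice's. -/
def cB (n : ℕ) : ℕ :=
  (Finset.univ.filter (fun s : Fin n → Bool => aliceScore s < bobScore s)).card

/-- Number of length-`n` coin sequences where Alice's score strictly exceeds Bob's. -/
def cA (n : ℕ) : ℕ :=
  (Finset.univ.filter (fun s : Fin n → Bool => bobScore s < aliceScore s)).card

/-- `Δ_n = (c_B(n) - c_A(n)) / 2^n`, as a rational number. -/
def Δ (n : ℕ) : ℚ := ((cB n : ℚ) - (cA n : ℚ)) / 2 ^ n

/-! Read as a transfer matrix on the states `T, H`, `M z` weights a step into `H` by `z⁻¹` from `T`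
and by `z` from `H`, so `(1,1) M(z)^(n-1) (1,1)ᵀ = ∑ₛ z^(-e s)` with `e s = #TH - #HH`. The kernel
`(1 - z)⁻¹ (z^(-k) - z^k) = ∑_{j < 2k} z^(j-k)` is a Laurent polynomial (the pole at `z = 1`
cancels), with residue `sign k` at `0` for every `k : ℤ`; so the integral is `2πi ∑ₛ sign (e s)`
on every circle. Reversing a sequence exchanges `TH` with `HT` and fixes `HH`, which turns
`∑ₛ sign (e s)` into `c_B(n) - c_A(n)`. -/

open Finset Matrix Metric Complex

theorem Fintype.sum_fin_succ_pi {ι M : Type*} [Fintype ι] [AddCommMonoid M] {m : ℕ}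
    (f : (Fin (m + 1) → ι) → M) : ∑ t, f t = ∑ a, ∑ s : Fin m → ι, f (Fin.cons a s) := by
  rw [← (Fin.consEquiv fun _ => ι).sum_comp, Fintype.sum_prod_type]
  rfl

theorem Finset.prod_zpow_eq_zpow_sum₀ {ι G₀ : Type*} [CommGroupWithZero G₀] (s : Finset ι)
    (f : ι → ℤ) {a : G₀} (ha : a ≠ 0) : ∏ i ∈ s, a ^ f i = a ^ ∑ i ∈ s, f i := by
  induction s using Finset.cons_induction with
  | empty => simp
  | cons i s hi ih => rw [prod_cons, sum_cons, ih, zpow_add₀ ha]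

theorem Finset.sum_sign_natCast_sub {α : Type*} (s : Finset α) (f g : α → ℕ) :
    ∑ x ∈ s, ((f x : ℤ) - g x).sign = #{x ∈ s | g x < f x} - #{x ∈ s | f x < g x} := by
  have hsign (x : α) : ((f x : ℤ) - g x).sign =
      (if g x < f x then 1 else 0) - (if f x < g x then 1 else 0) := by
    rcases lt_trichotomy (f x) (g x) with h | h | h
    · simp [h, h.not_gt, Int.sign_eq_neg_one_of_neg]
    · simp [h]
    · simp [h, h.not_gt, Int.sign_eq_one_of_pos]
  simp [hsign, sum_sub_distrib, sum_boole]

namespace Matrix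

variable {ι R : Type*}

def walkWeight [CommMonoid R] (A : Matrix ι ι R) {m : ℕ} (t : Fin (m + 1) → ι) : R :=
  ∏ i : Fin m, A (t i.castSucc) (t i.succ)

theorem walkWeight_cons [CommMonoid R] (A : Matrix ι ι R) {m : ℕ} (a : ι) (t : Fin (m + 1) → ι) :
    A.walkWeight (Fin.cons a t) = A a (t 0) * A.walkWeight t := by
  simp [walkWeight, Fin.prod_univ_succ]

variable [Fintype ι] [DecidableEq ι] [CommSemiring R] (A : Matrix ι ι R)

theorem pow_mulVec_one_apply (m : ℕ) (a : ι) :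
    (A ^ m *ᵥ 1) a = ∑ t : Fin m → ι, A.walkWeight (Fin.cons a t) := by
  induction m generalizing a with
  | zero => simp [walkWeight]
  | succ m ih =>
    rw [pow_succ', ← mulVec_mulVec, Fintype.sum_fin_succ_pi]
    change ∑ b, A a b * (A ^ m *ᵥ 1) b = _
    simp only [ih, mul_sum, walkWeight_cons, Fin.cons_zero]

theorem one_dotProduct_pow_mulVec_one (m : ℕ) :
    1 ⬝ᵥ (A ^ m *ᵥ 1) = ∑ t : Fin (m + 1) → ι, A.walkWeight t := by
  simp [dotProduct, pow_mulVec_one_apply, Fintype.sum_fin_succ_pi (A.walkWeight)]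

end Matrix

section Scores

variable {m : ℕ}

def pairCount (a b : Bool) (t : Fin (m + 1) → Bool) : ℕ :=
  #{i : Fin m | t i.castSucc = a ∧ t i.succ = b}

theorem aliceScore_eq_pairCount (t : Fin (m + 1) → Bool) :
    aliceScore t = pairCount true true t := rfl

theorem bobScore_eq_pairCount (t : Fin (m + 1) → Bool) :
    bobScore t = pairCount true false t := rfl

theorem pairCount_comp_rev (a b : Bool) (t : Fin (m + 1) → Bool) :
    pairCount a b (t ∘ Fin.rev) = pairCount b a t :=
  card_equiv Fin.revPerm fun i => by simp [Fin.rev_castSucc, Fin.rev_succ, and_comm]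

def scoreExponent (t : Fin (m + 1) → Bool) : ℤ :=
  pairCount false true t - pairCount true true t

theorem sum_sign_scoreExponent :
    ∑ t : Fin (m + 1) → Bool, (scoreExponent t).sign = (cB (m + 1) : ℤ) - cA (m + 1) := by
  calc ∑ t, (scoreExponent t).sign
      = ∑ t : Fin (m + 1) → Bool, ((bobScore t : ℤ) - aliceScore t).sign :=
      Fintype.sum_equiv (Fin.revPerm.arrowCongr (Equiv.refl Bool)) _ _ fun t => by
        change _ =
          ((pairCount true false (t ∘ Fin.rev) : ℤ) - pairCount true true (t ∘ Fin.rev)).sign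
        rw [pairCount_comp_rev, pairCount_comp_rev, scoreExponent]
    _ = cB (m + 1) - cA (m + 1) := sum_sign_natCast_sub _ _ _

end Scores

section TransferMatrix

variable {z : ℂ}

theorem M_finTwoEquiv_symm_apply (a b : Bool) :
    M z (finTwoEquiv.symm a) (finTwoEquiv.symm b) =
      z⁻¹ ^ ((if a = false ∧ b = true then 1 else 0) -
        (if a = true ∧ b = true then 1 else 0) : ℤ) := by
  cases a <;> cases b <;> simp [M, finTwoEquiv]

theorem walkWeight_M (hz : z ≠ 0) {m : ℕ} (t : Fin (m + 1) → Bool) :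
    (M z).walkWeight (finTwoEquiv.symm ∘ t) = z⁻¹ ^ scoreExponent t := by
  simp only [walkWeight, Function.comp_apply, M_finTwoEquiv_symm_apply,
    prod_zpow_eq_zpow_sum₀ _ _ (inv_ne_zero hz), sum_sub_distrib, sum_boole, scoreExponent,
    pairCount]

theorem dotProduct_M_pow_mulVec (hz : z ≠ 0) (m : ℕ) :
    ![1, 1] ⬝ᵥ (M z ^ m *ᵥ ![1, 1]) = ∑ t : Fin (m + 1) → Bool, z⁻¹ ^ scoreExponent t := by
  have hone : (![1, 1] : Fin 2 → ℂ) = 1 := by ext i; fin_cases i <;> rfl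
  rw [hone, one_dotProduct_pow_mulVec_one]
  exact (Fintype.sum_equiv (Equiv.arrowCongr (Equiv.refl _) finTwoEquiv.symm) _ _
    fun t => (walkWeight_M hz t).symm).symm

end TransferMatrix

section Laurent

variable {r : ℝ}

theorem ne_zero_of_mem_sphere_zero (hr : 0 < r) {z : ℂ} (hz : z ∈ sphere 0 r) : z ≠ 0 := by
  rintro rfl
  simp [hr.ne] at hz

theorem ne_one_of_mem_sphere_zero (hr1 : r ≠ 1) {z : ℂ} (hz : z ∈ sphere 0 r) : z ≠ 1 := by
  rintro rfl
  simp [hr1.symm] at hz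

theorem circleIntegral_zpow (hr : 0 < r) (n : ℤ) :
    (∮ z in C(0, r), z ^ n) = if n = -1 then 2 * (π : ℂ) * I else 0 := by
  split_ifs with h
  · subst h
    simpa [_root_.zpow_neg_one] using
      circleIntegral.integral_sub_inv_of_mem_ball (c := 0) (w := 0) (R := r) (by simpa using hr)
  · simpa using circleIntegral.integral_sub_zpow_of_ne h 0 0 r

theorem circleIntegral_sum_zpow_sub (hr : 0 < r) (k : ℕ) :
    (∮ z in C(0, r), ∑ j ∈ range (2 * k), z ^ ((j : ℤ) - k)) =
      if 0 < k then 2 * (π : ℂ) * I else 0 := by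
  rw [circleIntegral.integral_fun_sum fun j _ => ?_]
  · simp only [circleIntegral_zpow hr]
    cases k with
    | zero => simp
    | succ k =>
      have hcond : ∀ j : ℕ, (j : ℤ) - ↑(k + 1) = -1 ↔ k = j := by omega
      simp only [hcond, sum_ite_eq, mem_range]
      simp [show k < 2 * (k + 1) by omega]
  · exact (continuousOn_id.zpow₀ _ fun z hz =>
      Or.inl (ne_zero_of_mem_sphere_zero hr hz)).circleIntegrable hr.le

theorem inv_one_sub_mul_zpow_neg_sub_zpow {z : ℂ} (hz : z ≠ 0) (hz1 : z ≠ 1) (k : ℕ) :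
    (1 - z)⁻¹ * (z ^ (-(k : ℤ)) - z ^ (k : ℤ)) = ∑ j ∈ range (2 * k), z ^ ((j : ℤ) - k) := by
  have h1z : 1 - z ≠ 0 := sub_ne_zero.2 hz1.symm
  have hsum : ∑ j ∈ range (2 * k), z ^ ((j : ℤ) - k) =
      z ^ (-(k : ℤ)) * ∑ j ∈ range (2 * k), z ^ j := by
    rw [mul_sum]
    refine sum_congr rfl fun j _ => ?_
    rw [← zpow_natCast, ← zpow_add₀ hz]
    ring_nf
  have hpow : z ^ (-(k : ℤ)) * z ^ (2 * k) = z ^ (k : ℤ) := by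
    rw [← zpow_natCast, ← zpow_add₀ hz]
    push_cast
    ring_nf
  rw [hsum, inv_mul_eq_iff_eq_mul₀ h1z, mul_left_comm, mul_neg_geom_sum, mul_sub, hpow, mul_one]

theorem circleIntegrable_inv_one_sub_mul_zpow_neg_sub_zpow (hr : 0 < r) (hr1 : r ≠ 1) (k : ℤ) :
    CircleIntegrable (fun z => (1 - z)⁻¹ * (z ^ (-k) - z ^ k)) 0 r := by
  have hz (n : ℤ) : ContinuousOn (fun z : ℂ => z ^ n) (sphere 0 r) :=
    continuousOn_id.zpow₀ n fun z hz => Or.inl (ne_zero_of_mem_sphere_zero hr hz)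
  refine (ContinuousOn.mul ?_ ((hz _).sub (hz _))).circleIntegrable hr.le
  exact (continuousOn_const.sub continuousOn_id).inv₀ fun z hz =>
    sub_ne_zero.2 (ne_one_of_mem_sphere_zero hr1 hz).symm

theorem circleIntegral_inv_one_sub_mul_zpow_neg_sub_zpow (hr : 0 < r) (hr1 : r ≠ 1) (k : ℤ) :
    (∮ z in C(0, r), (1 - z)⁻¹ * (z ^ (-k) - z ^ k)) = 2 * π * I * k.sign := by
  have hnat (k : ℕ) :
      (∮ z in C(0, r), (1 - z)⁻¹ * (z ^ (-(k : ℤ)) - z ^ (k : ℤ))) = 2 * π * I * (k : ℤ).sign := by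
    rw [circleIntegral.integral_congr hr.le fun z hz => inv_one_sub_mul_zpow_neg_sub_zpow
      (ne_zero_of_mem_sphere_zero hr hz) (ne_one_of_mem_sphere_zero hr1 hz) k,
      circleIntegral_sum_zpow_sub hr k]
    rcases k.eq_zero_or_pos with rfl | hk
    · simp
    · simp [hk, Int.sign_eq_one_of_pos]
  obtain ⟨k, rfl | rfl⟩ := Int.eq_nat_or_neg k
  · exact hnat k
  · have hodd (z : ℂ) : (1 - z)⁻¹ * (z ^ (-(-(k : ℤ))) - z ^ (-(k : ℤ))) =
        -1 * ((1 - z)⁻¹ * (z ^ (-(k : ℤ)) - z ^ (k : ℤ))) := by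
      rw [neg_neg]
      ring
    simp only [hodd, circleIntegral.integral_const_mul, hnat, Int.sign_neg]
    push_cast
    ring

end Laurent

/-- Complex-integral formula for `Δ_n`: for any `n ≥ 1` and any circle of radius
    `r > 0`, `r ≠ 1`, centered at the origin,
    `Δ_n = 2⁻ⁿ (2πi)⁻¹ ∮ (1,1)(M(z)^(n-1) - M(1/z)^(n-1))(1-z)⁻¹(1,1)ᵀ dz`. -/
theorem delta_eq_circleIntegral (n : ℕ) (hn : 1 ≤ n) (r : ℝ) (hr : 0 < r) (hr1 : r ≠ 1) :
    (Δ n : ℂ) = (2 : ℂ) ^ (-(n : ℤ)) * (1 / (2 * (π : ℂ) * Complex.I)) *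
      (∮ z in C(0, r), dotProduct ![1, 1]
        (((1 - z)⁻¹ • (M z ^ (n - 1) - M z⁻¹ ^ (n - 1))).mulVec ![1, 1])) := by
  obtain ⟨m, rfl⟩ : ∃ m, n = m + 1 := ⟨n - 1, by omega⟩
  have hintegrand : Set.EqOn
      (fun z => ![1, 1] ⬝ᵥ (((1 - z)⁻¹ • (M z ^ (m + 1 - 1) - M z⁻¹ ^ (m + 1 - 1))) *ᵥ ![1, 1]))
      (fun z => ∑ t : Fin (m + 1) → Bool,
        (1 - z)⁻¹ * (z ^ (-scoreExponent t) - z ^ scoreExponent t)) (sphere 0 r) := fun z hz => by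
    have hz := ne_zero_of_mem_sphere_zero hr hz
    simp only [Nat.add_sub_cancel, smul_mulVec, sub_mulVec, dotProduct_smul, dotProduct_sub,
      dotProduct_M_pow_mulVec hz, dotProduct_M_pow_mulVec (inv_ne_zero hz), inv_inv,
      _root_.inv_zpow', smul_eq_mul, mul_sub, mul_sum, sum_sub_distrib]
  rw [circleIntegral.integral_congr hr.le hintegrand, circleIntegral.integral_fun_sum fun t _ =>
    circleIntegrable_inv_one_sub_mul_zpow_neg_sub_zpow hr hr1 _]
  simp only [circleIntegral_inv_one_sub_mul_zpow_neg_sub_zpow hr hr1, ← mul_sum]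
  rw [← Int.cast_sum, sum_sign_scoreExponent, Δ]
  push_cast
  field_simp
  rw [mul_assoc, ← zpow_natCast, ← zpow_add₀ two_ne_zero]
  simp
end

section
/- Define integers e_n = 2·(c_B(n) − c_A(n)) + 1 for n ≥ 0, and let E = Σ_{n≥0} e_n X^n ∈ ℤ⟦X⟧ be the corresponding formal power series. Then E² · (4X⁴ − 4X³ + X² − 2X + 1) = 1 in the ring of formal power series ℤ⟦X⟧. (This is the algebraic form of the identity Σ Δ_n (2t)^n = 1/(2√(4t⁴−4t³+t²−2t+1)) − 1/(2(1−t)).) -/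
open PowerSeries

/-- `e_n = 2 (c_B(n) - c_A(n)) + 1`. -/
def e (n : ℕ) : ℤ := 2 * ((cB n : ℤ) - (cA n : ℤ)) + 1

/-!
Let `d(s) = B(s) - A(s)`. Appending a coin changes `d` only when the last coin is `H` (by `-1`
for `HH`, by `+1` for `HT`), so the series `U k = ∑ₙ #{s of length n ending in H, d(s) = k} Xⁿ`
satisfy `(1 - X) U k = X (1 - X) U (k + 1) + X² U (k - 1) + [k = 0] X`. This system has a unique
solution in `ℤ⟦X⟧`, and it is geometric on either side of `0`: with `Z` the root of
`(1 - X) Z = X - X² + X² Z²` and `Q = 1 - X - 2 X² Z`, one has `Q U k = X (X Z / (1 - X))ᵏ` for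
`k ≥ 0` and `Q U k = X Z⁻ᵏ` for `k ≤ 0`. Since `Δₙ = c_B(n) - c_A(n)` satisfies
`Δₙ₊₁ = 2 Δₙ + [Xⁿ] U (-1) - [Xⁿ] U 1`, this yields `E Q = 1`, and `Q² = 4X⁴ - 4X³ + X² - 2X + 1`
by the equation of `Z`.
-/

open Finset

lemma Int.sign_eq_ite (d : ℤ) : d.sign = if 0 < d then 1 else if d < 0 then -1 else 0 := by
  rcases lt_trichotomy d 0 with h | rfl | h
  · simp [Int.sign_eq_neg_one_of_neg h, h, h.not_gt]
  · simp
  · simp [Int.sign_eq_one_of_pos h, h]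

lemma Int.sign_sub_one_add_sign_add_one (d : ℤ) :
    (d - 1).sign + (d + 1).sign =
      2 * d.sign + (if d = -1 then 1 else 0) - if d = 1 then 1 else 0 := by
  simp only [Int.sign_eq_ite]
  split_ifs <;> omega

lemma sum_tuple_eq_sum_snoc {α M : Type*} [Fintype α] [AddCommMonoid M] {n : ℕ}
    (F : (Fin (n + 1) → α) → M) :
    ∑ s, F s = ∑ s : Fin n → α, ∑ a, F (Fin.snoc s a) := by
  rw [← (Fin.snocEquiv fun _ => α).sum_comp, Fintype.sum_prod_type_right]
  rfl

def headPairCount (c : Bool) {n : ℕ} (s : Fin n → Bool) : ℕ :=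
  #{i : Fin (n - 1) | s ⟨i.1, lt_of_lt_of_le i.2 (Nat.sub_le n 1)⟩ = true ∧
    s ⟨i.1 + 1, Nat.add_lt_of_lt_sub i.2⟩ = c}

lemma bobScore_eq_headPairCount {n : ℕ} (s : Fin n → Bool) :
    bobScore s = headPairCount false s := rfl

lemma aliceScore_eq_headPairCount {n : ℕ} (s : Fin n → Bool) :
    aliceScore s = headPairCount true s := rfl

/-- The empty sequence counts as ending in `T`: appending a coin to it creates no pair. -/
def lastHead : {n : ℕ} → (Fin n → Bool) → Bool
  | 0, _ => false
  | _ + 1, s => s (Fin.last _)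

lemma lastHead_snoc {n : ℕ} (s : Fin n → Bool) (b : Bool) :
    lastHead (Fin.snoc s b : Fin (n + 1) → Bool) = b := by
  simp [lastHead]

lemma headPairCount_snoc (c : Bool) {n : ℕ} (s : Fin n → Bool) (b : Bool) :
    headPairCount c (Fin.snoc s b : Fin (n + 1) → Bool) =
      headPairCount c s + if lastHead s = true ∧ b = c then 1 else 0 := by
  cases n with
  | zero => simp [headPairCount, lastHead]
  | succ n =>
    simp only [headPairCount, card_filter]
    erw [Fin.sum_univ_castSucc]
    simp only [Fin.snoc, Nat.add_one_sub_one, Fin.val_castSucc, Order.lt_add_one_iff, Fin.is_le',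
      ↓reduceDIte, Fin.castLT_mk, Fin.castSucc_mk, cast_eq, Order.add_one_le_iff, Fin.is_lt,
      sum_boole, Nat.cast_id, Fin.val_last, lt_add_iff_pos_right, Order.lt_one_iff,
      lt_self_iff_false, lastHead, Nat.add_left_cancel_iff]
    rfl

def scoreDiff {n : ℕ} (s : Fin n → Bool) : ℤ := bobScore s - aliceScore s

lemma scoreDiff_fin_zero (s : Fin 0 → Bool) : scoreDiff s = 0 := by
  simp [scoreDiff, bobScore, aliceScore]

lemma scoreDiff_snoc {n : ℕ} (s : Fin n → Bool) (b : Bool) :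
    scoreDiff (Fin.snoc s b : Fin (n + 1) → Bool) =
      scoreDiff s + if lastHead s then (if b then -1 else 1) else 0 := by
  simp only [scoreDiff, bobScore_eq_headPairCount, aliceScore_eq_headPairCount,
    headPairCount_snoc]
  cases lastHead s <;> cases b <;>
    simp only [Bool.false_eq_true, Bool.true_eq_false, and_true, and_false, and_self, ↓reduceIte,
      add_zero, Nat.cast_add, Nat.cast_one] <;> ring

def endCount (n : ℕ) (b : Bool) (k : ℤ) : ℕ :=
  #{s : Fin n → Bool | lastHead s = b ∧ scoreDiff s = k}

lemma endCount_zero (b : Bool) (k : ℤ) :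
    endCount 0 b k = if b = false ∧ k = 0 then 1 else 0 := by
  rw [endCount, univ_unique, filter_singleton]
  simp only [lastHead, scoreDiff_fin_zero, eq_comm (a := false), eq_comm (a := (0 : ℤ))]
  split_ifs <;> rfl

lemma endCount_succ (n : ℕ) (b : Bool) (k : ℤ) :
    endCount (n + 1) b k =
      endCount n true (if b then k + 1 else k - 1) + endCount n false k := by
  simp only [endCount, card_filter, sum_tuple_eq_sum_snoc, Fintype.sum_bool, lastHead_snoc,
    scoreDiff_snoc, ← sum_add_distrib]
  refine sum_congr rfl fun s _ => ?_
  cases lastHead s <;> cases b <;>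
    simp only [Bool.true_eq_false, Bool.false_eq_true, ↓reduceIte, add_zero, zero_add, false_and,
      true_and] <;> split_ifs <;> omega

lemma cB_sub_cA_eq_sum_sign (n : ℕ) :
    (cB n : ℤ) - cA n = ∑ s : Fin n → Bool, (scoreDiff s).sign := by
  rw [cB, cA, card_filter, card_filter]
  push_cast
  rw [← sum_sub_distrib]
  refine sum_congr rfl fun s _ => ?_
  rw [Int.sign_eq_ite, scoreDiff]
  split_ifs <;> omega

lemma cB_sub_cA_succ (n : ℕ) :
    (cB (n + 1) : ℤ) - cA (n + 1) =
      2 * ((cB n : ℤ) - cA n) + endCount n true (-1) - endCount n true 1 := by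
  rw [cB_sub_cA_eq_sum_sign, sum_tuple_eq_sum_snoc, cB_sub_cA_eq_sum_sign, endCount, endCount,
    card_filter, card_filter]
  push_cast
  rw [mul_sum, ← sum_add_distrib, ← sum_sub_distrib]
  refine sum_congr rfl fun s _ => ?_
  simp only [Fintype.sum_bool, scoreDiff_snoc]
  cases lastHead s
  · simp only [Bool.false_eq_true, ↓reduceIte, add_zero, false_and, sub_zero]
    ring
  · simpa [← sub_eq_add_neg] using Int.sign_sub_one_add_sign_add_one (scoreDiff s)

noncomputable def endSeries (b : Bool) (k : ℤ) : ℤ⟦X⟧ := mk fun n => (endCount n b k : ℤ)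

lemma endSeries_true (k : ℤ) :
    endSeries true k = X * (endSeries true (k + 1) + endSeries false k) := by
  ext (_ | n) <;> simp [endSeries, endCount_succ, endCount_zero, coeff_succ_X_mul]

lemma endSeries_false (k : ℤ) :
    endSeries false k =
      (if k = 0 then 1 else 0) + X * (endSeries true (k - 1) + endSeries false k) := by
  ext (_ | n) <;> split_ifs <;>
    simp [endSeries, endCount_succ, endCount_zero, coeff_succ_X_mul, coeff_one, *]

lemma one_sub_X_mul_endSeries_true (k : ℤ) :
    (1 - X) * endSeries true k =
      X * (1 - X) * endSeries true (k + 1) + X ^ 2 * endSeries true (k - 1) +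
        if k = 0 then X else 0 := by
  have hV := endSeries_false k
  split_ifs at hV ⊢ <;> linear_combination (1 - X) * endSeries_true k + X * hV

noncomputable def diffSeries : ℤ⟦X⟧ := mk fun n => (cB n : ℤ) - cA n

lemma diffSeries_eq :
    diffSeries = X * (2 * diffSeries + endSeries true (-1) - endSeries true 1) := by
  ext (_ | n)
  · simp [diffSeries, cB_sub_cA_eq_sum_sign, scoreDiff_fin_zero]
  · simp [diffSeries, endSeries, coeff_succ_X_mul, cB_sub_cA_succ, two_mul]

theorem PowerSeries.eq_zero_of_forall_one_sub_X_mul_eq {R : Type*} [CommRing R]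
    {H : ℤ → R⟦X⟧}
    (hH : ∀ k, (1 - X) * H k = X * (1 - X) * H (k + 1) + X ^ 2 * H (k - 1)) (k : ℤ) :
    H k = 0 := by
  have hdvd : ∀ n k, X ^ n ∣ H k := by
    intro n
    induction n with
    | zero => simp
    | succ n ih =>
      intro k
      obtain ⟨a, ha⟩ := ih k
      obtain ⟨b, hb⟩ := ih (k + 1)
      obtain ⟨c, hc⟩ := ih (k - 1)
      exact ⟨a + (1 - X) * b + X * c, by
        linear_combination hH k + X * ha + X * (1 - X) * hb + X ^ 2 * hc⟩
  ext n
  simpa using X_pow_dvd_iff.mp (hdvd (n + 1) k) n n.lt_succ_self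

/-- The coefficientwise form of `(1 - X) Z = X - X² + X² Z²`, which determines `Z = X + X⁴ + ⋯`. -/
def zCoeff : ℕ → ℤ
  | 0 => 0
  | 1 => 1
  | n + 2 => zCoeff (n + 1) - (if n = 0 then 1 else 0) +
      ∑ p ∈ (antidiagonal n).attach, zCoeff p.1.1 * zCoeff p.1.2
decreasing_by
  all_goals first
    | omega
    | have := mem_antidiagonal.mp p.2; omega

noncomputable def zSeries : ℤ⟦X⟧ := mk zCoeff

lemma one_sub_X_mul_zSeries : (1 - X) * zSeries = X - X ^ 2 + X ^ 2 * zSeries ^ 2 := by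
  ext (_ | _ | n)
  · simp [zSeries, zCoeff]
  · simp [zSeries, zCoeff, sub_mul, coeff_X_pow_mul']
  · rw [sub_mul, one_mul, map_sub, coeff_succ_X_mul, map_add, map_sub, coeff_X, coeff_X_pow,
      if_neg (by omega), show n + 1 + 1 = n + 2 from rfl, coeff_X_pow_mul, sq, coeff_mul]
    simp only [zSeries, coeff_mk, zCoeff, Nat.add_eq_right,
      sum_attach (antidiagonal n) fun p => zCoeff p.1 * zCoeff p.2]
    ring

noncomputable def wSeries : ℤ⟦X⟧ := X * zSeries * PowerSeries.mk 1

lemma one_sub_X_mul_wSeries : (1 - X) * wSeries = X * (1 - X) * wSeries ^ 2 + X ^ 2 := by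
  rw [wSeries]
  linear_combination (X * PowerSeries.mk 1) * one_sub_X_mul_zSeries +
    (X ^ 2 - X ^ 3 * zSeries ^ 2 * PowerSeries.mk 1) * mk_one_mul_one_sub_eq_one ℤ

noncomputable def twoSidedGeom (k : ℤ) : ℤ⟦X⟧ := X * wSeries ^ k.toNat * zSeries ^ (-k).toNat

lemma one_sub_X_mul_twoSidedGeom (k : ℤ) :
    (1 - X) * twoSidedGeom k =
      X * (1 - X) * twoSidedGeom (k + 1) + X ^ 2 * twoSidedGeom (k - 1) +
        if k = 0 then X * (1 - X - 2 * X ^ 2 * zSeries) else 0 := by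
  simp only [twoSidedGeom]
  rcases lt_trichotomy k 0 with hk | rfl | hk
  · obtain ⟨m, hm⟩ : ∃ m : ℕ, (-k).toNat = m + 1 := ⟨(-k - 1).toNat, by omega⟩
    rw [if_neg hk.ne, hm, show (-(k + 1)).toNat = m by omega,
      show (-(k - 1)).toNat = m + 2 by omega, show k.toNat = 0 by omega,
      show (k + 1).toNat = 0 by omega, show (k - 1).toNat = 0 by omega]
    linear_combination X * zSeries ^ m * one_sub_X_mul_zSeries
  · simp only [wSeries, Int.toNat_zero, pow_zero, mul_one, neg_zero, zero_add, Int.toNat_one,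
      pow_one, Int.reduceNeg, Int.reduceToNat, zero_sub, neg_neg, ↓reduceIte]
    linear_combination (-X ^ 3 * zSeries) * mk_one_mul_one_sub_eq_one ℤ
  · obtain ⟨m, hm⟩ : ∃ m : ℕ, k.toNat = m + 1 := ⟨(k - 1).toNat, by omega⟩
    rw [if_neg hk.ne', hm, show (k + 1).toNat = m + 2 by omega,
      show (k - 1).toNat = m by omega, show (-k).toNat = 0 by omega,
      show (-(k + 1)).toNat = 0 by omega, show (-(k - 1)).toNat = 0 by omega]
    linear_combination X * wSeries ^ m * one_sub_X_mul_wSeries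

lemma mul_endSeries_true_eq_twoSidedGeom (k : ℤ) :
    (1 - X - 2 * X ^ 2 * zSeries) * endSeries true k = twoSidedGeom k := by
  rw [← sub_eq_zero]
  refine eq_zero_of_forall_one_sub_X_mul_eq
    (H := fun k => (1 - X - 2 * X ^ 2 * zSeries) * endSeries true k - twoSidedGeom k)
    (fun k => ?_) k
  have hU := one_sub_X_mul_endSeries_true k
  have hG := one_sub_X_mul_twoSidedGeom k
  split_ifs at hU hG <;> linear_combination (1 - X - 2 * X ^ 2 * zSeries) * hU - hG

lemma mul_diffSeries :
    (1 - X - 2 * X ^ 2 * zSeries) * diffSeries = X ^ 2 * zSeries * PowerSeries.mk 1 := by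
  have h1 : (1 - X - 2 * X ^ 2 * zSeries) * endSeries true 1 = X * wSeries ^ 1 * zSeries ^ 0 :=
    mul_endSeries_true_eq_twoSidedGeom 1
  have h2 : (1 - X - 2 * X ^ 2 * zSeries) * endSeries true (-1) =
      X * wSeries ^ 0 * zSeries ^ 1 :=
    mul_endSeries_true_eq_twoSidedGeom (-1)
  have hne : (1 - 2 * X : ℤ⟦X⟧) ≠ 0 := fun h => by simpa using congrArg constantCoeff h
  refine mul_left_cancel₀ hne ?_
  rw [wSeries] at h1
  linear_combination (1 - X - 2 * X ^ 2 * zSeries) * diffSeries_eq + X * h2 - X * h1 -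
    X ^ 2 * zSeries * mk_one_mul_one_sub_eq_one ℤ

lemma mk_e_mul_eq_one : PowerSeries.mk e * (1 - X - 2 * X ^ 2 * zSeries) = 1 := by
  have hE : PowerSeries.mk e = 2 * diffSeries + PowerSeries.mk 1 := by
    ext n
    simp [e, diffSeries, two_mul]
  rw [hE]
  linear_combination 2 * mul_diffSeries + mk_one_mul_one_sub_eq_one ℤ

lemma one_sub_X_sub_two_X_sq_mul_zSeries_sq :
    (1 - X - 2 * X ^ 2 * zSeries) ^ 2 = 4 * (X : ℤ⟦X⟧) ^ 4 - 4 * X ^ 3 + X ^ 2 - 2 * X + 1 := by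
  linear_combination (-4 * X ^ 2) * one_sub_X_mul_zSeries

/-- The generating function `E = Σ e_n Xⁿ ∈ ℤ⟦X⟧` satisfies
    `E² (4X⁴ - 4X³ + X² - 2X + 1) = 1`. -/
theorem e_gen_fun_sq_identity :
    (PowerSeries.mk e) ^ 2 *
      (4 * (X : ℤ⟦X⟧) ^ 4 - 4 * X ^ 3 + X ^ 2 - 2 * X + 1) = 1 := by
  rw [← one_sub_X_sub_two_X_sq_mul_zSeries_sq, ← mul_pow, mk_e_mul_eq_one, one_pow]
end

section
/- Let k ≥ 1, and let g ∈ ℝ⟦X⟧ be a formal power series with constant coefficient 0 that is k-samo (all coefficients nonnegative, and the i-th coefficient strictly positive for every i ≥ k). Let f ∈ ℝ⟦X⟧ satisfy the differential equation f′ = g′ · f (formal derivatives) together with constant coefficient f(0) = 1, so that f = exp(g). Then f is k-samo: every coefficient of f is nonnegative, and the i-th coefficient of f is strictly positive for all i ≥ k. (If log f is k-samo, then so is f.) -/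
/-!
Comparing coefficients of `X^n` in `f' = g' f` gives the recursion
`(n + 1) f_{n+1} = ∑_{i+j=n} (i + 1) g_{i+1} f_j`. With `g ≥ 0` and `f_0 = 1`, nonnegativity of `f`
propagates along it, and its single term `(i, j) = (n, 0)` gives `f_{n+1} ≥ g_{n+1}`, so `f` is
positive wherever `g` is.
-/

open PowerSeries Finset

namespace PowerSeries

variable {R : Type*}

theorem coeff_succ_mul_eq_sum_of_derivative_eq_mul [CommSemiring R] {f g : R⟦X⟧}
    (hderiv : derivative R f = derivative R g * f) (n : ℕ) :
    coeff (n + 1) f * (n + 1) =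
      ∑ p ∈ antidiagonal n, coeff (p.1 + 1) g * (p.1 + 1) * coeff p.2 f := by
  simpa only [coeff_derivative, coeff_mul, Nat.cast_add, Nat.cast_one] using
    congrArg (coeff n) hderiv

variable [CommRing R] [LinearOrder R] [IsStrictOrderedRing R] {f g : R⟦X⟧}

theorem coeff_nonneg_of_derivative_eq_mul (hderiv : derivative R f = derivative R g * f)
    (hg : ∀ i, 0 ≤ coeff i g) (hf0 : 0 ≤ constantCoeff f) (n : ℕ) : 0 ≤ coeff n f := by
  induction n using Nat.strong_induction_on with
  | _ n ih =>
    cases n with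
    | zero => simpa using hf0
    | succ m =>
      have hsum : 0 ≤ coeff (m + 1) f * (m + 1) := by
        rw [coeff_succ_mul_eq_sum_of_derivative_eq_mul hderiv]
        refine Finset.sum_nonneg fun p hp => ?_
        have := ih p.2 (Nat.antidiagonal.snd_lt hp)
        have := hg (p.1 + 1)
        positivity
      exact nonneg_of_mul_nonneg_left hsum (by positivity)

theorem coeff_mul_constantCoeff_le_of_derivative_eq_mul
    (hderiv : derivative R f = derivative R g * f) (hg : ∀ i, 0 ≤ coeff i g)
    (hf0 : 0 ≤ constantCoeff f) (n : ℕ) :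
    coeff (n + 1) g * constantCoeff f ≤ coeff (n + 1) f := by
  have hf := coeff_nonneg_of_derivative_eq_mul hderiv hg hf0
  have hterm : coeff (n + 1) g * (n + 1) * coeff 0 f ≤ coeff (n + 1) f * (n + 1) := by
    rw [coeff_succ_mul_eq_sum_of_derivative_eq_mul hderiv]
    refine Finset.single_le_sum (f := fun p => coeff (p.1 + 1) g * (p.1 + 1) * coeff p.2 f)
      (fun p _ => ?_) (by simp : (n, 0) ∈ antidiagonal n)
    have := hf p.2
    have := hg (p.1 + 1)
    positivity
  rw [coeff_zero_eq_constantCoeff_apply, mul_right_comm] at hterm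
  exact le_of_mul_le_mul_right hterm (by positivity)

end PowerSeries

theorem samo_exp_general (k : ℕ) (g f : ℝ⟦X⟧)
    (hgnn : ∀ i, 0 ≤ coeff i g) (hgpos : ∀ i, k ≤ i → 0 < coeff i g)
    (hderiv : PowerSeries.derivative ℝ f = PowerSeries.derivative ℝ g * f)
    (hf0 : constantCoeff f = 1) :
    (∀ i, 0 ≤ coeff i f) ∧ (∀ i, k ≤ i → 0 < coeff i f) := by
  refine ⟨coeff_nonneg_of_derivative_eq_mul hderiv hgnn (hf0 ▸ zero_le_one), fun i hi => ?_⟩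
  cases i with
  | zero => simp [hf0]
  | succ n =>
    have hle := coeff_mul_constantCoeff_le_of_derivative_eq_mul hderiv hgnn (hf0 ▸ zero_le_one) n
    rw [hf0, mul_one] at hle
    exact (hgpos _ hi).trans_le hle

/-- If `log f` is `k`-samo then so is `f`: if `g` has zero constant term, all
    coefficients of `g` nonnegative and those of index `≥ k` positive (`k ≥ 1`),
    and `f` satisfies `f' = g' f` with `f(0) = 1` (so that `f = exp g`), then all
    coefficients of `f` are nonnegative and those of index `≥ k` are positive. -/
theorem samo_exp (k : ℕ) (hk : 1 ≤ k) (g f : ℝ⟦X⟧)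
    (hg0 : constantCoeff g = 0)
    (hgnn : ∀ i, 0 ≤ coeff i g) (hgpos : ∀ i, k ≤ i → 0 < coeff i g)
    (hderiv : PowerSeries.derivative ℝ f = PowerSeries.derivative ℝ g * f)
    (hf0 : constantCoeff f = 1) :
    (∀ i, 0 ≤ coeff i f) ∧ (∀ i, k ≤ i → 0 < coeff i f) :=
  samo_exp_general k g f hgnn hgpos hderiv hf0
end

section
/- Let φ = (−1 + i√7)/2 ∈ ℂ. Then for every natural number n, 2ⁿ + 2·Re(φⁿ) > 0. Consequently every Taylor coefficient at 0 of the function h(t) = (t+2)/(2t²+t+1) + 1/(1−2t) is strictly positive (h is samo). -/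
/-!
For real `t`, `2 Re (1 - φt)⁻¹ = (t + 2)/(2t² + t + 1)` because `|1 - φt|² = 2t² + t + 1`, so
expanding geometric series gives the Taylor coefficients `2ⁿ + 2 Re φⁿ` of `h`.
Since `|φ|² = 2`, `|2 Re φⁿ| ≤ 2|φⁿ| < |φⁿ|² = 2ⁿ` as soon as `|φⁿ| > 2`, i.e. for `n ≥ 3`;
the cases `n ≤ 2` are checked directly.
-/

/-- `φ = (-1 + i√7)/2`, a root of `z² + z + 2 = 0`. -/
noncomputable def φ : ℂ := (-1 + Complex.I * Real.sqrt 7) / 2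

/-- The function `h(t) = (t+2)/(2t²+t+1) + 1/(1-2t)`. -/
noncomputable def h (t : ℝ) : ℝ := (t + 2) / (2 * t ^ 2 + t + 1) + 1 / (1 - 2 * t)

open scoped NNReal

theorem HasFPowerSeriesAt.iteratedDeriv_div_factorial_eq {𝕜 : Type*} [NontriviallyNormedField 𝕜]
    [CompleteSpace 𝕜] [CharZero 𝕜] {f : 𝕜 → 𝕜} {c : ℕ → 𝕜} {x : 𝕜}
    (hf : HasFPowerSeriesAt f (FormalMultilinearSeries.ofScalars 𝕜 c) x) (n : ℕ) :
    iteratedDeriv n f x / n.factorial = c n :=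
  congrFun (FormalMultilinearSeries.ofScalars_series_injective 𝕜 𝕜
    (hf.analyticAt.hasFPowerSeriesAt.eq_formalMultilinearSeries hf)) n

theorem hasFPowerSeriesOnBall_ofScalars_of_hasSum {𝕜 : Type*} [RCLike 𝕜] {f : 𝕜 → 𝕜}
    {c : ℕ → 𝕜} {r : ℝ≥0} (hr : 0 < r)
    (hf : ∀ y : 𝕜, ‖y‖ < r → HasSum (fun n => c n * y ^ n) (f y)) :
    HasFPowerSeriesOnBall f (FormalMultilinearSeries.ofScalars 𝕜 c) 0 r where
  r_le := by
    refine ENNReal.le_of_forall_nnreal_lt fun ρ hρ => ?_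
    have hsum := (hf ((ρ : ℝ) : 𝕜) (by simpa using hρ)).summable
    refine FormalMultilinearSeries.le_radius_of_tendsto _ (l := 0) ?_
    simpa [FormalMultilinearSeries.ofScalars_norm] using hsum.tendsto_atTop_zero.norm
  r_pos := by simpa using hr
  hasSum {y} hy := by
    simpa [FormalMultilinearSeries.ofScalars_apply_eq, mul_comm] using hf y (by simpa using hy)

@[simp] lemma φ_re : φ.re = -1 / 2 := by simp [φ]

@[simp] lemma φ_im : φ.im = √7 / 2 := by simp [φ]

lemma normSq_φ : Complex.normSq φ = 2 := by
  rw [Complex.normSq_apply, φ_re, φ_im]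
  nlinarith [Real.sq_sqrt (show (0 : ℝ) ≤ 7 by norm_num)]

lemma norm_φ : ‖φ‖ = √2 := by
  rw [Complex.norm_def, normSq_φ]

lemma norm_φ_pow_sq (n : ℕ) : ‖φ ^ n‖ ^ 2 = 2 ^ n := by
  rw [norm_pow, ← pow_mul, mul_comm, pow_mul, Complex.sq_norm, normSq_φ]

lemma re_φ_sq : (φ ^ 2).re = -3 / 2 := by
  rw [pow_two, Complex.mul_re, φ_re, φ_im]
  nlinarith [Real.sq_sqrt (show (0 : ℝ) ≤ 7 by norm_num)]

theorem two_pow_add_two_mul_re_φ_pow_pos (n : ℕ) : 0 < (2 : ℝ) ^ n + 2 * (φ ^ n).re := by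
  match n with
  | 0 => norm_num
  | 1 => norm_num
  | 2 => norm_num [re_φ_sq]
  | n + 3 =>
    have hsq := norm_φ_pow_sq (n + 3)
    have h8 : (8 : ℝ) ≤ 2 ^ (n + 3) :=
      calc (8 : ℝ) = 2 ^ 3 := by norm_num
        _ ≤ 2 ^ (n + 3) := pow_le_pow_right₀ (by norm_num) (by omega)
    have hre := (abs_le.1 (Complex.abs_re_le_norm (φ ^ (n + 3)))).1
    nlinarith [norm_nonneg (φ ^ (n + 3))]

lemma two_mul_re_inv_one_sub_φ_mul (t : ℝ) :
    2 * ((1 - φ * t)⁻¹).re = (t + 2) / (2 * t ^ 2 + t + 1) := by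
  have hre : (1 - φ * t).re = 1 + t / 2 := by
    simp only [Complex.sub_re, Complex.one_re, Complex.mul_re, φ_re, φ_im, Complex.ofReal_re,
      Complex.ofReal_im]
    ring
  have him : (1 - φ * t).im = -(√7 / 2 * t) := by simp
  have hnormSq : Complex.normSq (1 - φ * t) = 2 * t ^ 2 + t + 1 := by
    rw [Complex.normSq_apply, hre, him]
    nlinarith [Real.sq_sqrt (show (0 : ℝ) ≤ 7 by norm_num)]
  have hpos : 0 < 2 * t ^ 2 + t + 1 := by nlinarith [sq_nonneg (4 * t + 1)]
  rw [Complex.inv_re, hnormSq, hre]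
  field_simp
  ring

lemma hasSum_h {y : ℝ} (hy : ‖y‖ < 2⁻¹) :
    HasSum (fun n => (2 ^ n + 2 * (φ ^ n).re) * y ^ n) (h y) := by
  have h2y : ‖2 * y‖ < 1 := by rw [norm_mul, Real.norm_two]; linarith
  have hφy : ‖φ * y‖ < 1 := by
    have : √2 < 2 := by rw [Real.sqrt_lt' two_pos]; norm_num
    rw [norm_mul, norm_φ, Complex.norm_real]
    nlinarith [norm_nonneg y]
  have hval : h y = (1 - 2 * y)⁻¹ + 2 * Complex.reCLM (1 - φ * y)⁻¹ := by
    rw [Complex.reCLM_apply, two_mul_re_inv_one_sub_φ_mul, h, one_div, add_comm]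
  have hterm : (fun n => (2 ^ n + 2 * (φ ^ n).re) * y ^ n) =
      fun n => (2 * y) ^ n + 2 * Complex.reCLM ((φ * y) ^ n) := by
    funext n
    simp only [Complex.reCLM_apply, mul_pow, ← Complex.ofReal_pow, Complex.re_mul_ofReal]
    ring
  rw [hval, hterm]
  exact (hasSum_geometric_of_norm_lt_one h2y).add
    (((hasSum_geometric_of_norm_lt_one hφy).mapL Complex.reCLM).mul_left 2)

/-- `2ⁿ + 2 Re(φⁿ) > 0` for every `n`; consequently every Taylor coefficient of
    `h(t) = (t+2)/(2t²+t+1) + 1/(1-2t)` at `0` is strictly positive (`h` is samo). -/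
theorem h_is_samo :
    (∀ n : ℕ, 0 < (2 : ℝ) ^ n + 2 * (φ ^ n).re) ∧
    (∀ n : ℕ, 0 < iteratedDeriv n h 0 / n.factorial) := by
  have hseries : HasFPowerSeriesOnBall h
      (FormalMultilinearSeries.ofScalars ℝ fun n => 2 ^ n + 2 * (φ ^ n).re) 0 (2⁻¹ : ℝ≥0) :=
    hasFPowerSeriesOnBall_ofScalars_of_hasSum (by norm_num) fun y hy => hasSum_h (by simpa using hy)
  refine ⟨two_pow_add_two_mul_re_φ_pow_pos, fun n => ?_⟩
  rw [hseries.hasFPowerSeriesAt.iteratedDeriv_div_factorial_eq]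
  exact two_pow_add_two_mul_re_φ_pow_pos n
end

section
/- (Stanley's diagonal lemma.) Let f, g, h be polynomials over ℚ with h(0) = 0. In the ring of multivariate formal power series over ℚ in two variables x, y, the element u = 1 − x·f(xy) − y·g(xy) − h(xy) has constant term 1 and hence is invertible; let G = u⁻¹, and let D ∈ ℚ⟦t⟧ be the diagonal of G, i.e. the univariate power series whose n-th coefficient is the coefficient of x^n y^n in G. Then D(t)² · ((1 − h(t))² − 4·t·f(t)·g(t)) = 1 in ℚ⟦t⟧, i.e. D(t) = 1/√((1−h(t))² − 4t f(t) g(t)). -/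
/-!
Choose `r ∈ k⟦t⟧` with `r(0) = 1` and `r (1 - h - r) = t f g` (a root of a quadratic, built from
the binomial series of `√(1 + t)`), and put `a = f / r`, `b = g / r`. Then
`u = r(xy) (1 - x a(xy)) (1 - y b(xy))`, and partial fractions give
`u⁻¹ = s(xy)⁻¹ ((1 - x a(xy))⁻¹ + (1 - y b(xy))⁻¹ - 1)` with `s = r (1 - t a b) = 2 r - (1 - h)`.
Taking the diagonal commutes with multiplication by series in `xy`, and the inverse of
`1 - x a(xy)` has no diagonal monomial besides `1`, because every monomial of `x a(xy)` has larger
`x`-degree than `y`-degree. Hence `D = s⁻¹`, while `s² = (1 - h)² - 4 t f g`.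
-/

open PowerSeries

namespace MvPowerSeries

variable {R : Type*} [CommRing R]

lemma hasSubst_X_zero_mul_X_one : PowerSeries.HasSubst (X 0 * X 1 : MvPowerSeries (Fin 2) R) :=
  PowerSeries.HasSubst.of_constantCoeff_zero (by simp)

noncomputable def substXY : R⟦X⟧ →ₐ[R] MvPowerSeries (Fin 2) R :=
  PowerSeries.substAlgHom hasSubst_X_zero_mul_X_one

lemma substXY_X : substXY (PowerSeries.X : R⟦X⟧) = X 0 * X 1 :=
  PowerSeries.substAlgHom_X _

lemma substXY_coe (p : Polynomial R) :
    substXY (p : R⟦X⟧) = Polynomial.aeval (X 0 * X 1 : MvPowerSeries (Fin 2) R) p :=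
  PowerSeries.substAlgHom_coe _ p

lemma coeff_substXY (φ : R⟦X⟧) (e : Fin 2 →₀ ℕ) :
    coeff e (substXY φ) = if e 0 = e 1 then PowerSeries.coeff (e 0) φ else 0 := by
  classical
  have hpow (d : ℕ) : (X 0 * X 1 : MvPowerSeries (Fin 2) R) ^ d =
      monomial (Finsupp.single 0 d + Finsupp.single 1 d) 1 := by
    rw [mul_pow, X_pow_eq, X_pow_eq, monomial_mul_monomial, one_mul]
  rw [substXY, PowerSeries.coe_substAlgHom, PowerSeries.coeff_subst hasSubst_X_zero_mul_X_one]
  simp only [hpow, coeff_monomial]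
  split_ifs with he
  · rw [finsum_eq_single _ (e 0)]
    · rw [if_pos (by ext i; fin_cases i <;> simp [he]), smul_eq_mul, mul_one]
    · intro d hd
      rw [if_neg (fun h => hd (by simpa using (congrArg (· 0) h).symm)), smul_zero]
  · refine finsum_eq_zero_of_forall_eq_zero fun d => ?_
    rw [if_neg (fun h => he (by simp [h])), smul_zero]

lemma constantCoeff_substXY (φ : R⟦X⟧) :
    constantCoeff (substXY φ) = PowerSeries.constantCoeff φ := by
  rw [← coeff_zero_eq_constantCoeff_apply, coeff_substXY]
  simp

noncomputable def diagonal : MvPowerSeries (Fin 2) R →ₗ[R] R⟦X⟧ where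
  toFun Φ := PowerSeries.mk fun n => coeff (Finsupp.single 0 n + Finsupp.single 1 n) Φ
  map_add' Φ Ψ := by ext; simp
  map_smul' c Φ := by ext; simp

lemma coeff_diagonal (Φ : MvPowerSeries (Fin 2) R) (n : ℕ) :
    PowerSeries.coeff n (diagonal Φ) = coeff (Finsupp.single 0 n + Finsupp.single 1 n) Φ := by
  simp [diagonal]

lemma diagonal_one : diagonal (1 : MvPowerSeries (Fin 2) R) = 1 := by
  ext n
  rw [coeff_diagonal, coeff_one, PowerSeries.coeff_one]
  simp

lemma diagonal_substXY_mul (a : R⟦X⟧) (Φ : MvPowerSeries (Fin 2) R) :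
    diagonal (substXY a * Φ) = a * diagonal Φ := by
  classical
  ext n
  rw [coeff_diagonal, coeff_mul, PowerSeries.coeff_mul]
  symm
  refine Finset.sum_bij_ne_zero
    (fun p _ _ => (Finsupp.single 0 p.1 + Finsupp.single 1 p.1,
      Finsupp.single 0 p.2 + Finsupp.single 1 p.2)) ?_ ?_ ?_ ?_
  · intro p hp _
    rw [Finset.HasAntidiagonal.mem_antidiagonal] at hp ⊢
    simp only [← hp, Finsupp.single_add]
    abel
  · intro p _ _ q _ _ hpq
    simp only [Prod.mk.injEq] at hpq
    exact Prod.ext (by simpa using congrArg (· 0) hpq.1) (by simpa using congrArg (· 0) hpq.2)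
  · intro q hq hne
    rw [Finset.HasAntidiagonal.mem_antidiagonal] at hq
    have h01 : q.1 0 = q.1 1 := by
      by_contra h
      rw [coeff_substXY, if_neg h, zero_mul] at hne
      exact hne rfl
    have h0 : q.1 0 + q.2 0 = n := by simpa using congrArg (· 0) hq
    have h1 : q.1 1 + q.2 1 = n := by simpa using congrArg (· 1) hq
    have hq₁ : q.1 = Finsupp.single 0 (q.1 0) + Finsupp.single 1 (q.1 0) := by
      ext i; fin_cases i <;> simp [h01]
    have hq₂ : q.2 = Finsupp.single 0 (n - q.1 0) + Finsupp.single 1 (n - q.1 0) := by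
      ext i; fin_cases i <;> simp <;> omega
    refine ⟨(q.1 0, n - q.1 0), by simp; omega, ?_, Prod.ext hq₁.symm hq₂.symm⟩
    rw [coeff_substXY, if_pos h01] at hne
    rwa [coeff_diagonal, ← hq₂]
  · intro p _ _
    rw [coeff_diagonal, coeff_substXY]
    simp

lemma coeff_eq_of_mul_one_sub_X_mul_substXY_eq_one {i j : Fin 2} (hij : i ≠ j) {α : R⟦X⟧}
    {E : MvPowerSeries (Fin 2) R} (hE : E * (1 - X i * substXY α) = 1)
    {e : Fin 2 →₀ ℕ} (he : e i ≤ e j) : coeff e E = if e = 0 then 1 else 0 := by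
  classical
  have hij' (d : Fin 2 →₀ ℕ) : d i = d j ↔ d 0 = d 1 := by
    fin_cases i <;> fin_cases j <;> simp_all [eq_comm]
  have hE' : E = 1 + X i * (substXY α * E) := by linear_combination hE
  induction hn : e i using Nat.strong_induction_on generalizing e with
  | _ n ih =>
    rw [hE', map_add, coeff_one, X, coeff_monomial_mul, add_eq_left]
    split_ifs with hle
    · rw [one_mul, coeff_mul]
      refine Finset.sum_eq_zero fun p hp => ?_
      rw [Finset.HasAntidiagonal.mem_antidiagonal] at hp
      have hpi := congrArg (· i) hp
      have hpj := congrArg (· j) hp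
      have hei : 1 ≤ e i := by simpa using hle i
      simp only [Finsupp.add_apply, Finsupp.tsub_apply, Finsupp.single_eq_same,
        Finsupp.single_eq_of_ne hij.symm] at hpi hpj
      by_cases h : p.1 i = p.1 j
      · rw [ih (p.2 i) (by omega) (by omega) rfl, if_neg, mul_zero]
        intro h0
        simp [h0] at hpi hpj
        omega
      · rw [coeff_substXY, if_neg ((hij' _).not.mp h), zero_mul]
    · rfl

lemma diagonal_eq_one_of_mul_one_sub_X_mul_substXY_eq_one {i j : Fin 2} (hij : i ≠ j)
    {α : R⟦X⟧} {E : MvPowerSeries (Fin 2) R} (hE : E * (1 - X i * substXY α) = 1) :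
    diagonal E = 1 := by
  ext n
  rw [coeff_diagonal, coeff_eq_of_mul_one_sub_X_mul_substXY_eq_one hij hE, PowerSeries.coeff_one]
  · simp
  · fin_cases i <;> fin_cases j <;> simp

variable {k : Type*} [Field k]

lemma diagonal_inv_substXY_mul_one_sub_mul_one_sub (r a b : k⟦X⟧)
    (hr : PowerSeries.constantCoeff r ≠ 0) :
    diagonal (substXY r * ((1 - X 0 * substXY a) * (1 - X 1 * substXY b)))⁻¹
      = (r * (1 - PowerSeries.X * a * b))⁻¹ := by
  set P : MvPowerSeries (Fin 2) k := X 0 * substXY a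
  set Q : MvPowerSeries (Fin 2) k := X 1 * substXY b
  have hP : constantCoeff (1 - P) ≠ 0 := by simp [P]
  have hQ : constantCoeff (1 - Q) ≠ 0 := by simp [Q]
  have hPQ : P * Q = substXY (PowerSeries.X * a * b) := by
    simp only [P, Q, map_mul, substXY_X]; ring
  have hdiagP : diagonal (1 - P)⁻¹ = 1 :=
    diagonal_eq_one_of_mul_one_sub_X_mul_substXY_eq_one (j := 1) (by decide)
      (MvPowerSeries.inv_mul_cancel _ hP)
  have hdiagQ : diagonal (1 - Q)⁻¹ = 1 :=
    diagonal_eq_one_of_mul_one_sub_X_mul_substXY_eq_one (j := 0) (by decide)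
      (MvPowerSeries.inv_mul_cancel _ hQ)
  clear_value P Q
  set s := r * (1 - PowerSeries.X * a * b)
  have hs : PowerSeries.constantCoeff s ≠ 0 := by simpa [s]
  have hinv : (substXY r * ((1 - P) * (1 - Q)))⁻¹
      = substXY s⁻¹ * ((1 - P)⁻¹ + (1 - Q)⁻¹ - 1) := by
    rw [MvPowerSeries.inv_eq_iff_mul_eq_one
      (by simpa [constantCoeff_substXY, hr] using And.intro hP hQ)]
    have hPinv := MvPowerSeries.mul_inv_cancel _ hP
    have hQinv := MvPowerSeries.mul_inv_cancel _ hQ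
    have hsinv : substXY (s⁻¹ * s) = 1 := by rw [PowerSeries.inv_mul_cancel _ hs, map_one]
    rw [map_mul, map_mul, map_sub, map_one, ← hPQ] at hsinv
    linear_combination (substXY s⁻¹ * substXY r * (1 - Q)) * hPinv
      + (substXY s⁻¹ * substXY r * (1 - P)) * hQinv + hsinv
  rw [hinv, diagonal_substXY_mul, map_sub, map_add, diagonal_one, hdiagP, hdiagQ]
  ring

end MvPowerSeries

namespace PowerSeries

lemma exists_sq_eq_of_constantCoeff_eq_one {A : Type*} [CommRing A] [Algebra ℚ A] {W : A⟦X⟧}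
    (hW : constantCoeff W = 1) : ∃ s : A⟦X⟧, constantCoeff s = 1 ∧ s ^ 2 = W := by
  have ha : HasSubst (W - 1) := HasSubst.of_constantCoeff_zero' (by simp [hW])
  set B := binomialSeries A (2⁻¹ : ℚ)
  have hB : B ^ 2 = 1 + X := by
    rw [sq, ← binomialSeries_add, show (2⁻¹ + 2⁻¹ : ℚ) = ((1 : ℕ) : ℚ) by norm_num,
      binomialSeries_nat, pow_one]
  have hB₀ : constantCoeff (substAlgHom ha (B - 1)) = 0 := by
    rw [coe_substAlgHom]
    refine constantCoeff_subst_eq_zero ?_ _ (by simp [B])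
    rw [map_sub, map_one, sub_eq_zero]
    exact hW
  refine ⟨substAlgHom ha B, ?_, ?_⟩
  · rw [← sub_add_cancel B 1, map_add, map_add, hB₀, map_one, map_one, zero_add]
  · rw [← map_pow, hB, map_add, map_one, substAlgHom_X]
    ring

lemma exists_mul_sub_eq {k : Type*} [Field k] [CharZero k] {A B : k⟦X⟧}
    (hA : constantCoeff A = 1) (hB : constantCoeff B = 0) :
    ∃ r : k⟦X⟧, constantCoeff r = 1 ∧ r * (A - r) = B := by
  obtain ⟨s, hs₀, hs⟩ := exists_sq_eq_of_constantCoeff_eq_one (W := A ^ 2 - 4 * B)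
    (by simp [hA, hB])
  set c : k⟦X⟧ := C (2⁻¹ : k)
  have hc : 2 * c = 1 := by
    rw [← map_ofNat C 2, ← map_mul]; simp
  refine ⟨c * (A + s), by simp [c, hA, hs₀]; norm_num, ?_⟩
  linear_combination (-c * A * (A + s) + B * (2 * c + 1)) * hc - c ^ 2 * hs

end PowerSeries

namespace MvPowerSeries

theorem diagonal_inv_sq_mul_eq_one {k : Type*} [Field k] [CharZero k] (f g h : k⟦X⟧)
    (hh : PowerSeries.constantCoeff h = 0) :
    diagonal (1 - X 0 * substXY f - X 1 * substXY g - substXY h)⁻¹ ^ 2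
      * ((1 - h) ^ 2 - 4 * PowerSeries.X * f * g) = 1 := by
  obtain ⟨r, hr₀, hr⟩ := PowerSeries.exists_mul_sub_eq (A := 1 - h)
    (B := PowerSeries.X * f * g) (by simp [hh]) (by simp)
  have hrr : r * r⁻¹ = 1 := PowerSeries.mul_inv_cancel _ (by simp [hr₀])
  have hu : 1 - X 0 * substXY f - X 1 * substXY g - substXY h
      = substXY r * ((1 - X 0 * substXY (f * r⁻¹)) * (1 - X 1 * substXY (g * r⁻¹))) := by
    have hA : r * (1 + PowerSeries.X * (f * r⁻¹) * (g * r⁻¹)) = 1 - h := by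
      linear_combination (-(r⁻¹ ^ 2 * r)) * hr + (1 - h - r) * (r * r⁻¹ + 1) * hrr
    have hA' := congrArg substXY hA
    have hrr' := congrArg substXY hrr
    simp only [map_mul, map_add, map_sub, map_one, substXY_X] at hA' hrr' ⊢
    linear_combination -hA' + (X 0 * substXY f + X 1 * substXY g) * hrr'
  have hs : r * (1 - PowerSeries.X * (f * r⁻¹) * (g * r⁻¹)) = 2 * r - (1 - h) := by
    linear_combination (r⁻¹ ^ 2 * r) * hr - (1 - h - r) * (r * r⁻¹ + 1) * hrr
  have hs₀ : PowerSeries.constantCoeff (2 * r - (1 - h)) ≠ 0 := by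
    rw [map_sub, map_sub, map_mul, map_ofNat, map_one, hr₀, hh]; norm_num
  rw [hu, diagonal_inv_substXY_mul_one_sub_mul_one_sub _ _ _ (by simp [hr₀]), hs]
  calc (2 * r - (1 - h))⁻¹ ^ 2 * ((1 - h) ^ 2 - 4 * PowerSeries.X * f * g)
      = ((2 * r - (1 - h))⁻¹ * (2 * r - (1 - h))) ^ 2 := by
        linear_combination 4 * (2 * r - (1 - h))⁻¹ ^ 2 * hr
    _ = 1 := by rw [PowerSeries.inv_mul_cancel _ hs₀, one_pow]

end MvPowerSeries

/-- Stanley's diagonal lemma: for polynomials `f, g, h` over `ℚ` with `h(0) = 0`,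
    let `G = (1 - x f(xy) - y g(xy) - h(xy))⁻¹` in `ℚ⟦x,y⟧` and let `D` be its
    diagonal. Then `D² ((1 - h(t))² - 4 t f(t) g(t)) = 1`, i.e.
    `D(t) = 1/√((1-h(t))² - 4 t f(t) g(t))`. -/
theorem stanley_diagonal (f g h : Polynomial ℚ) (hh : h.coeff 0 = 0)
    (u : MvPowerSeries (Fin 2) ℚ)
    (hu : u = 1
      - (MvPowerSeries.X 0 : MvPowerSeries (Fin 2) ℚ) *
          Polynomial.aeval ((MvPowerSeries.X 0 : MvPowerSeries (Fin 2) ℚ) *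
            MvPowerSeries.X 1) f
      - (MvPowerSeries.X 1 : MvPowerSeries (Fin 2) ℚ) *
          Polynomial.aeval ((MvPowerSeries.X 0 : MvPowerSeries (Fin 2) ℚ) *
            MvPowerSeries.X 1) g
      - Polynomial.aeval ((MvPowerSeries.X 0 : MvPowerSeries (Fin 2) ℚ) *
          MvPowerSeries.X 1) h)
    (D : PowerSeries ℚ)
    (hD : D = PowerSeries.mk fun n =>
      MvPowerSeries.coeff (σ := Fin 2) (R := ℚ) (Finsupp.single 0 n + Finsupp.single 1 n) u⁻¹) :
    MvPowerSeries.constantCoeff (σ := Fin 2) (R := ℚ) u = 1 ∧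
    D ^ 2 * ((1 - (h : PowerSeries ℚ)) ^ 2 -
      4 * PowerSeries.X * (f : PowerSeries ℚ) * (g : PowerSeries ℚ)) = 1 := by
  have hh' : PowerSeries.constantCoeff (h : PowerSeries ℚ) = 0 := by
    rwa [Polynomial.constantCoeff_coe]
  simp only [← MvPowerSeries.substXY_coe] at hu
  have hD' : D = MvPowerSeries.diagonal u⁻¹ := hD
  subst hu hD'
  exact ⟨by simp [MvPowerSeries.constantCoeff_substXY, hh'],
    MvPowerSeries.diagonal_inv_sq_mul_eq_one _ _ _ hh'⟩
end

section
/- Let steps : Fin 5 → ℕ×ℕ be given by steps = ((6,5), (0,1), (1,1), (3,3), (3,3)), and for a, b ∈ ℕ let N(a,b) be the number of finite lists ℓ of elements of Fin 5 whose componentwise sum of steps equals (a,b). Then the diagonal generating function D = Σ_{n≥0} N(n,n) X^n ∈ ℤ⟦X⟧ satisfies D² · (4X⁴ − 4X³ + X² − 2X + 1) = 1 in ℤ⟦X⟧, i.e. Σ_n N(n,n) t^n = 1/√(4t⁴ − 4t³ + t² − 2t + 1). -/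
/-!
Since `(6,5) + (0,1) = (6,6)`, a path ends on the diagonal iff it uses `(6,5)` and `(0,1)`
equally often. Give these two steps height `±1` and weight `3`, and the steps `(1,1)`, `(3,3)`,
`(3,3)` height `0` and weights `1, 3, 3`: then `D` counts bridges of this skip-free walk by weight.
Cutting a walk at its first passage to height `1` gives, for the series `F` of first passages,
`F = X³ + (X + 2X³) F + X³ F²` and `D = 1 + (X + 2X³) D + 2X³ F D` (a walk of height `-1` is the
mirror image of one of height `1`). Hence `D (1 - X - 2X³ - 2X³F) = 1`, and the quadratic for `F`
gives `(1 - X - 2X³ - 2X³F)² = (1 - X - 2X³)² - 4X⁶ = 4X⁴ - 4X³ + X² - 2X + 1`.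
-/

open PowerSeries

/-- The colored step set `S = {(6,5),(0,1),(1,1),(3,3)}` with `(3,3)` having two
    colors (so it is listed twice). -/
def steps : Fin 5 → ℕ × ℕ := ![(6, 5), (0, 1), (1, 1), (3, 3), (3, 3)]

/-- `N(a,b)`: the number of colored lattice paths (lists of colored steps) whose
    componentwise sum of steps is `(a, b)`. -/
noncomputable def N (a b : ℕ) : ℕ :=
  Nat.card {ℓ : List (Fin 5) // (ℓ.map steps).sum = (a, b)}

namespace WeightedWords

variable {α : Type*}

section Weight

variable (wt : α → ℕ)

def weight (ℓ : List α) : ℕ := (ℓ.map wt).sum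

noncomputable def wordGF (P : List α → Prop) : ℤ⟦X⟧ :=
  mk fun n => (Nat.card {ℓ : List α // P ℓ ∧ weight wt ℓ = n} : ℤ)

variable {wt}

@[simp] lemma weight_nil : weight wt [] = 0 := rfl

@[simp] lemma weight_cons (x : α) (ℓ : List α) : weight wt (x :: ℓ) = wt x + weight wt ℓ := by
  simp [weight]

@[simp] lemma weight_append (u v : List α) : weight wt (u ++ v) = weight wt u + weight wt v := by
  simp [weight]

lemma coeff_wordGF (P : List α → Prop) (n : ℕ) :
    coeff n (wordGF wt P) = Nat.card {ℓ : List α // P ℓ ∧ weight wt ℓ = n} :=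
  coeff_mk _ _

lemma wordGF_congr {P Q : List α → Prop} (h : ∀ ℓ, P ℓ ↔ Q ℓ) : wordGF wt P = wordGF wt Q := by
  rw [funext fun ℓ => propext (h ℓ)]

lemma length_le_weight (hwt : ∀ x, 0 < wt x) (ℓ : List α) : ℓ.length ≤ weight wt ℓ := by
  induction ℓ with
  | nil => simp
  | cons x ℓ ih => simpa [Nat.add_comm 1] using Nat.add_le_add (hwt x) ih

lemma finite_of_weight_le [Finite α] (hwt : ∀ x, 0 < wt x) {Q : List α → Prop} (n : ℕ)
    (hQ : ∀ ℓ, Q ℓ → weight wt ℓ ≤ n) : Finite {ℓ : List α // Q ℓ} :=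
  ((List.finite_length_le α n).subset fun ℓ hℓ =>
    (length_le_weight hwt ℓ).trans (hQ ℓ hℓ)).to_subtype

lemma wordGF_eq_nil : wordGF wt (· = []) = 1 := by
  ext n
  rw [coeff_wordGF, coeff_one]
  split_ifs with hn
  · subst hn
    exact congrArg _ (Nat.card_eq_one_iff_exists.2 ⟨⟨[], rfl, rfl⟩, fun ℓ => Subtype.ext ℓ.2.1⟩)
  · have : IsEmpty {ℓ : List α // ℓ = [] ∧ weight wt ℓ = n} :=
      ⟨fun ⟨ℓ, h, hw⟩ => hn (by simp [← hw, h])⟩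
    simp

lemma wordGF_comp_map (e : α ≃ α) (he : ∀ x, wt (e x) = wt x) (P : List α → Prop) :
    wordGF wt (fun ℓ => P (ℓ.map e)) = wordGF wt P := by
  ext n
  simp only [coeff_wordGF]
  refine congrArg _ (Nat.card_congr (Equiv.subtypeEquiv (Functor.mapEquiv List e) fun ℓ => ?_))
  simp [weight, Function.comp_def, he]

def consEquiv (Q : List α → Prop) :
    {ℓ // Q ℓ} ≃ {_u : Unit // Q []} ⊕ Σ x, {ℓ // Q (x :: ℓ)} where
  toFun
    | ⟨[], h⟩ => .inl ⟨(), h⟩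
    | ⟨x :: ℓ, h⟩ => .inr ⟨x, ℓ, h⟩
  invFun
    | .inl ⟨_, h⟩ => ⟨[], h⟩
    | .inr ⟨x, ℓ, h⟩ => ⟨x :: ℓ, h⟩
  left_inv := by rintro ⟨_ | _, _⟩ <;> rfl
  right_inv := by rintro (⟨_, _⟩ | ⟨_, _, _⟩) <;> rfl

lemma natCard_add_weight_eq (P : List α → Prop) (c n : ℕ) :
    Nat.card {ℓ : List α // P ℓ ∧ c + weight wt ℓ = n} =
      if c ≤ n then Nat.card {ℓ : List α // P ℓ ∧ weight wt ℓ = n - c} else 0 := by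
  split_ifs with h
  · exact Nat.card_congr (Equiv.subtypeEquivRight fun ℓ => and_congr_right fun _ => by omega)
  · have : IsEmpty {ℓ : List α // P ℓ ∧ c + weight wt ℓ = n} := ⟨fun ℓ => by omega⟩
    exact Nat.card_of_isEmpty

lemma natCard_unit_subtype (p : Prop) [Decidable p] :
    Nat.card {_u : Unit // p} = if p then 1 else 0 := by
  split_ifs with h <;> simp [h]

open scoped Classical in
lemma wordGF_cons [Fintype α] (hwt : ∀ x, 0 < wt x) (P : List α → Prop) :
    wordGF wt P = (if P [] then 1 else 0) + ∑ x, X ^ wt x * wordGF wt (fun ℓ => P (x :: ℓ)) := by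
  ext n
  have : ∀ x, Finite {ℓ // P (x :: ℓ) ∧ weight wt (x :: ℓ) = n} := fun x =>
    finite_of_weight_le hwt n fun ℓ h => by simp only [weight_cons] at h; omega
  rw [coeff_wordGF, Nat.card_congr (consEquiv _), Nat.card_sum, Nat.card_sigma,
    natCard_unit_subtype]
  simp only [weight_cons, natCard_add_weight_eq, map_add, map_sum, coeff_X_pow_mul', coeff_wordGF,
    weight_nil]
  push_cast
  congr 1
  by_cases hP : P [] <;> simp [hP, coeff_one, eq_comm]

lemma wordGF_mul_of_append [Finite α] (hwt : ∀ x, 0 < wt x) {S T U : List α → Prop}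
    (hcode : ∀ u u' v v', S u → S u' → u ++ v = u' ++ v' → u = u')
    (hmem : ∀ u v, S u → T v → U (u ++ v))
    (hsplit : ∀ ℓ, U ℓ → ∃ u v, S u ∧ T v ∧ u ++ v = ℓ) :
    wordGF wt U = wordGF wt S * wordGF wt T := by
  ext n
  have : ∀ P : List α → Prop, ∀ m, Finite {ℓ // P ℓ ∧ weight wt ℓ = m} := fun P m =>
    finite_of_weight_le hwt m fun ℓ h => h.2.le
  let f : (Σ p : Finset.HasAntidiagonal.antidiagonal n,
      {u // S u ∧ weight wt u = p.1.1} × {v // T v ∧ weight wt v = p.1.2}) →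
      {ℓ // U ℓ ∧ weight wt ℓ = n} := fun ⟨p, u, v⟩ =>
    ⟨u.1 ++ v.1, hmem _ _ u.2.1 v.2.1, by
      rw [weight_append, u.2.2, v.2.2, Finset.HasAntidiagonal.mem_antidiagonal.1 p.2]⟩
  have hf : f.Bijective := by
    constructor
    · rintro ⟨⟨⟨i, j⟩, _⟩, ⟨u, hu, hi⟩, ⟨v, hv, hj⟩⟩
        ⟨⟨⟨i', j'⟩, _⟩, ⟨u', hu', hi'⟩, ⟨v', hv', hj'⟩⟩ h
      dsimp only at hi hj hi' hj'
      subst hi hj hi' hj'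
      have huv : u ++ v = u' ++ v' := congrArg Subtype.val h
      obtain rfl := hcode u u' v v' hu hu' huv
      obtain rfl := List.append_cancel_left huv
      rfl
    · rintro ⟨ℓ, hU, rfl⟩
      obtain ⟨u, v, hu, hv, rfl⟩ := hsplit ℓ hU
      exact ⟨⟨⟨(weight wt u, weight wt v), by simp⟩, ⟨u, hu, rfl⟩, ⟨v, hv, rfl⟩⟩,
        rfl⟩
  rw [coeff_wordGF, ← Nat.card_eq_of_bijective f hf, Nat.card_sigma, coeff_mul]
  push_cast
  simp only [Nat.card_prod, coeff_wordGF, Nat.cast_mul]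
  exact Finset.sum_coe_sort _ fun p : ℕ × ℕ =>
    (Nat.card {u // S u ∧ weight wt u = p.1} : ℤ) * Nat.card {v // T v ∧ weight wt v = p.2}

end Weight

section Height

variable (h : α → ℤ)

def height (ℓ : List α) : ℤ := (ℓ.map h).sum

/-- The walk with increments `h` along the word ends at height `k` and stays strictly below `k`
before. -/
def IsFirstPassage : ℤ → List α → Prop
  | k, [] => k = 0
  | k, x :: ℓ => 0 < k ∧ IsFirstPassage (k - h x) ℓ

variable {h}

@[simp] lemma height_nil : height h [] = 0 := rfl

@[simp] lemma height_cons (x : α) (ℓ : List α) : height h (x :: ℓ) = h x + height h ℓ := by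
  simp [height]

@[simp] lemma height_append (u v : List α) : height h (u ++ v) = height h u + height h v := by
  simp [height]

lemma isFirstPassage_zero_iff {ℓ : List α} : IsFirstPassage h 0 ℓ ↔ ℓ = [] := by
  cases ℓ <;> simp [IsFirstPassage]

lemma IsFirstPassage.nonneg {k : ℤ} {ℓ : List α} (hℓ : IsFirstPassage h k ℓ) : 0 ≤ k := by
  cases ℓ with
  | nil => exact hℓ.ge
  | cons x ℓ => exact hℓ.1.le

lemma IsFirstPassage.height_eq {k : ℤ} {ℓ : List α} (hℓ : IsFirstPassage h k ℓ) :
    height h ℓ = k := by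
  induction ℓ generalizing k with
  | nil => exact hℓ.symm
  | cons x ℓ ih => rw [height_cons, ih hℓ.2]; ring

lemma IsFirstPassage.eq_of_append_eq {k : ℤ} {u u' v v' : List α} (hu : IsFirstPassage h k u)
    (hu' : IsFirstPassage h k u') (huv : u ++ v = u' ++ v') : u = u' := by
  induction u generalizing k u' with
  | nil => exact (isFirstPassage_zero_iff.1 (hu ▸ hu')).symm
  | cons x u ih =>
    cases u' with
    | nil => exact absurd hu.1 (hu'.symm ▸ lt_irrefl 0)
    | cons y u' =>
      obtain ⟨rfl, htail⟩ := List.cons_eq_cons.1 (by simpa using huv)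
      rw [ih hu.2 hu'.2 htail]

lemma IsFirstPassage.append {k m : ℤ} {u v : List α} (hu : IsFirstPassage h k u)
    (hv : IsFirstPassage h m v) : IsFirstPassage h (k + m) (u ++ v) := by
  induction u generalizing k with
  | nil => rwa [show k = 0 from hu, zero_add]
  | cons x u ih =>
    refine ⟨by linarith [hu.1, hv.nonneg], ?_⟩
    rw [show k + m - h x = k - h x + m by ring]
    exact ih hu.2

lemma IsFirstPassage.of_append {k m : ℤ} {u v : List α} (huv : IsFirstPassage h (k + m) (u ++ v))
    (hu : IsFirstPassage h k u) : IsFirstPassage h m v := by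
  induction u generalizing k with
  | nil => rwa [show k = 0 from hu, zero_add] at huv
  | cons x u ih =>
    have huv' : IsFirstPassage h (k - h x + m) (u ++ v) := by
      rw [show k - h x + m = k + m - h x by ring]; exact huv.2
    exact ih huv' hu.2

lemma exists_isFirstPassage_append (hstep : ∀ x, h x ≤ 1) {k : ℤ} (hk : 0 ≤ k) {ℓ : List α}
    (hℓ : k ≤ height h ℓ) : ∃ u v, IsFirstPassage h k u ∧ u ++ v = ℓ := by
  induction ℓ generalizing k with
  | nil => exact ⟨[], [], le_antisymm hℓ hk, rfl⟩
  | cons x ℓ ih =>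
    rcases hk.eq_or_lt with rfl | hk
    · exact ⟨[], x :: ℓ, rfl, rfl⟩
    · rw [height_cons] at hℓ
      obtain ⟨u, v, hu, rfl⟩ := ih (k := k - h x) (by linarith [hstep x]) (by linarith)
      exact ⟨x :: u, v, ⟨hk, hu⟩, rfl⟩

variable {wt : α → ℕ}

lemma wordGF_isFirstPassage_zero : wordGF wt (IsFirstPassage h 0) = 1 :=
  (wordGF_congr fun _ => isFirstPassage_zero_iff).trans wordGF_eq_nil

lemma wordGF_isFirstPassage_add [Finite α] (hwt : ∀ x, 0 < wt x) (hstep : ∀ x, h x ≤ 1)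
    {k m : ℤ} (hk : 0 ≤ k) (hm : 0 ≤ m) :
    wordGF wt (IsFirstPassage h (k + m)) =
      wordGF wt (IsFirstPassage h k) * wordGF wt (IsFirstPassage h m) := by
  refine wordGF_mul_of_append hwt (fun _ _ _ _ hu hu' => hu.eq_of_append_eq hu')
    (fun _ _ hu hv => hu.append hv) fun ℓ hℓ => ?_
  obtain ⟨u, v, hu, rfl⟩ := exists_isFirstPassage_append hstep hk (ℓ := ℓ)
    (by linarith [hℓ.height_eq])
  exact ⟨u, v, hu, hℓ.of_append hu, rfl⟩

lemma wordGF_height_eq_add [Finite α] (hwt : ∀ x, 0 < wt x) (hstep : ∀ x, h x ≤ 1)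
    {k m : ℤ} (hk : 0 ≤ k) (hm : 0 ≤ m) :
    wordGF wt (height h · = k + m) =
      wordGF wt (IsFirstPassage h k) * wordGF wt (height h · = m) := by
  refine wordGF_mul_of_append hwt (fun _ _ _ _ hu hu' => hu.eq_of_append_eq hu')
    (fun _ _ hu hv => by rw [height_append, hu.height_eq, hv]) fun ℓ hℓ => ?_
  obtain ⟨u, v, hu, rfl⟩ := exists_isFirstPassage_append hstep hk (ℓ := ℓ) (by linarith)
  exact ⟨u, v, hu, by linarith [height_append (h := h) u v, hu.height_eq], rfl⟩

lemma wordGF_height_eq_neg (e : α ≃ α) (hwt : ∀ x, wt (e x) = wt x) (he : ∀ x, h (e x) = -h x)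
    (k : ℤ) : wordGF wt (height h · = -k) = wordGF wt (height h · = k) := by
  rw [← wordGF_comp_map e hwt]
  refine wordGF_congr fun ℓ => ?_
  have : height h (ℓ.map e) = -height h ℓ := by
    induction ℓ with
    | nil => rfl
    | cons x ℓ ih => rw [List.map_cons, height_cons, height_cons, ih, he, neg_add]
  rw [this, neg_inj]

end Height

end WeightedWords

namespace DiagonalWalk

open WeightedWords

def stepHeight (i : Fin 5) : ℤ := (steps i).1 - (steps i).2

/-- Since `(6,5) + (0,1) = (6,6)`, on words with `stepHeight`-sum zero this weight is the common
coordinate of the endpoint. -/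
def stepWeight : Fin 5 → ℕ := ![3, 3, 1, 3, 3]

lemma stepHeight_values :
    stepHeight 0 = 1 ∧ stepHeight 1 = -1 ∧ stepHeight 2 = 0 ∧ stepHeight 3 = 0 ∧
      stepHeight 4 = 0 := by decide

lemma stepWeight_values :
    stepWeight 0 = 3 ∧ stepWeight 1 = 3 ∧ stepWeight 2 = 1 ∧ stepWeight 3 = 3 ∧
      stepWeight 4 = 3 := by decide

lemma stepWeight_pos : ∀ i, 0 < stepWeight i := by decide

lemma stepHeight_le_one : ∀ i, stepHeight i ≤ 1 := by decide

lemma stepHeight_swap : ∀ i, stepHeight (Equiv.swap 0 1 i) = -stepHeight i := by decide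

lemma stepWeight_swap : ∀ i, stepWeight (Equiv.swap 0 1 i) = stepWeight i := by decide

lemma sum_steps_eq (ℓ : List (Fin 5)) :
    ((ℓ.map steps).sum.1 : ℤ) = weight stepWeight ℓ + 3 * height stepHeight ℓ ∧
      ((ℓ.map steps).sum.2 : ℤ) = weight stepWeight ℓ + 2 * height stepHeight ℓ := by
  induction ℓ with
  | nil => simp
  | cons i ℓ ih =>
    simp only [List.map_cons, List.sum_cons, Prod.fst_add, Prod.snd_add, weight_cons, height_cons]
    fin_cases i <;> simp [stepWeight, stepHeight, steps] at ih ⊢ <;> omega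

lemma diagonalGF_eq :
    (mk fun n => (N n n : ℤ)) = wordGF stepWeight (height stepHeight · = 0) := by
  ext n
  rw [coeff_mk, coeff_wordGF, N]
  refine congrArg _ (Nat.card_congr (Equiv.subtypeEquivRight fun ℓ => ?_))
  obtain ⟨h₁, h₂⟩ := sum_steps_eq ℓ
  rw [Prod.ext_iff]
  omega

lemma firstPassageGF_eq :
    wordGF stepWeight (IsFirstPassage stepHeight 1) =
      X ^ 3 + (X + 2 * X ^ 3) * wordGF stepWeight (IsFirstPassage stepHeight 1) +
        X ^ 3 * wordGF stepWeight (IsFirstPassage stepHeight 1) ^ 2 := by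
  have hcons : ∀ i, wordGF stepWeight (fun ℓ => IsFirstPassage stepHeight 1 (i :: ℓ)) =
      wordGF stepWeight (IsFirstPassage stepHeight (1 - stepHeight i)) := fun i =>
    wordGF_congr fun _ => and_iff_right one_pos
  have htwo : wordGF stepWeight (IsFirstPassage stepHeight (1 + 1)) =
      wordGF stepWeight (IsFirstPassage stepHeight 1) ^ 2 := by
    rw [sq, wordGF_isFirstPassage_add stepWeight_pos stepHeight_le_one zero_le_one zero_le_one]
  conv_lhs => rw [wordGF_cons stepWeight_pos, Fin.sum_univ_five]
  simp only [hcons, stepHeight_values, stepWeight_values, sub_self, sub_zero, sub_neg_eq_add,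
    htwo, wordGF_isFirstPassage_zero]
  simp only [IsFirstPassage, one_ne_zero, if_false, pow_one]
  ring

lemma diagonalGF_functional_eq :
    wordGF stepWeight (height stepHeight · = 0) =
      1 + (X + 2 * X ^ 3) * wordGF stepWeight (height stepHeight · = 0) +
        2 * X ^ 3 * wordGF stepWeight (IsFirstPassage stepHeight 1) *
          wordGF stepWeight (height stepHeight · = 0) := by
  have hcons : ∀ i, wordGF stepWeight (fun ℓ => height stepHeight (i :: ℓ) = 0) =
      wordGF stepWeight (height stepHeight · = -stepHeight i) := fun i =>
    wordGF_congr fun _ => by rw [height_cons]; omega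
  have hone : wordGF stepWeight (height stepHeight · = 1) =
      wordGF stepWeight (IsFirstPassage stepHeight 1) *
        wordGF stepWeight (height stepHeight · = 0) := by
    rw [← wordGF_height_eq_add stepWeight_pos stepHeight_le_one zero_le_one le_rfl, add_zero]
  conv_lhs => rw [wordGF_cons stepWeight_pos, Fin.sum_univ_five]
  simp only [hcons, stepHeight_values, stepWeight_values, neg_neg, neg_zero,
    wordGF_height_eq_neg _ stepWeight_swap stepHeight_swap, hone, height_nil, if_true, pow_one]
  ring

end DiagonalWalk

/-- The diagonal generating function `D = Σ N(n,n) Xⁿ ∈ ℤ⟦X⟧` satisfies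
    `D² (4X⁴ - 4X³ + X² - 2X + 1) = 1`, i.e.
    `Σ N(n,n) tⁿ = 1/√(4t⁴ - 4t³ + t² - 2t + 1)`. -/
theorem diagonal_gen_fun_sq_identity :
    (PowerSeries.mk fun n => (N n n : ℤ)) ^ 2 *
      (4 * (X : ℤ⟦X⟧) ^ 4 - 4 * X ^ 3 + X ^ 2 - 2 * X + 1) = 1 := by
  rw [DiagonalWalk.diagonalGF_eq]
  set D := WeightedWords.wordGF DiagonalWalk.stepWeight
    (WeightedWords.height DiagonalWalk.stepHeight · = 0)
  set F := WeightedWords.wordGF DiagonalWalk.stepWeight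
    (WeightedWords.IsFirstPassage DiagonalWalk.stepHeight 1)
  have hD : D * (1 - X - 2 * X ^ 3 - 2 * X ^ 3 * F) = 1 := by
    linear_combination DiagonalWalk.diagonalGF_functional_eq
  have hF : (1 - X - 2 * X ^ 3 - 2 * X ^ 3 * F) ^ 2 =
      4 * (X : ℤ⟦X⟧) ^ 4 - 4 * X ^ 3 + X ^ 2 - 2 * X + 1 := by
    linear_combination (-4 * (X : ℤ⟦X⟧) ^ 3) * DiagonalWalk.firstPassageGF_eq
  calc D ^ 2 * (4 * (X : ℤ⟦X⟧) ^ 4 - 4 * X ^ 3 + X ^ 2 - 2 * X + 1)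
      = (D * (1 - X - 2 * X ^ 3 - 2 * X ^ 3 * F)) ^ 2 := by rw [← hF]; ring
    _ = 1 := by rw [hD, one_pow]
end
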